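/- Let σ denote the surface measure on the unit sphere S^{nd-1} ⊂ (ℝ^d)^n, and define the push-forward measure σ(−) on ℝ^{(n-1)d} by σ(−)(A) = σ({(y_1,...,y_n) ∈ S^{nd-1} : (y_1 - y_n, ..., y_{n-1} - y_n) ∈ A}). Then σ(−) is absolutely continuous with respect to Lebesgue measure on ℝ^{(n-1)d}, and there exists a constant C depending only on n and d such that σ(−)(E) ≤ C·|E| for every Lebesgue measurable set E ⊂ ℝ^{(n-1)d}. -/

import Mathlib

set_option maxHeartbeats 1000000

open MeasureTheory Metric Set
open scoped ENNReal NNReal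

lemma packing' {ι : Type*} [Fintype ι] (A : Set (EuclideanSpace ℝ ι)) (hA : TotallyBounded A)
    {ε : ℝ} (hε : 0 < ε) :
    ∃ t : Finset (EuclideanSpace ℝ ι), ↑t ⊆ A ∧ (A ⊆ ⋃ x ∈ t, ball x (2*ε)) ∧
      (t.card : ℝ≥0∞) * volume (ball (0:EuclideanSpace ℝ ι) (ε/2)) ≤ volume (thickening ε A) := by
  classical
  obtain ⟨s, hs_sub, hs_fin, hs_cov⟩ :=
    totallyBounded_iff_subset.mp hA _ (Metric.dist_mem_uniformity hε)
  set s' := hs_fin.toFinset with hs'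
  have hs'A : (s' : Set _) ⊆ A := by
    intro x hx; exact hs_sub (by simpa [hs'] using hx)
  set P : Finset (EuclideanSpace ℝ ι) → Prop := fun u => ∀ x ∈ u, ∀ y ∈ u, x ≠ y → ε ≤ dist x y
    with hP
  obtain ⟨t, ht_mem, ht_max⟩ := Finset.exists_max_image (s'.powerset.filter P) Finset.card
    ⟨∅, by simp [hP]⟩
  rw [Finset.mem_filter, Finset.mem_powerset] at ht_mem
  obtain ⟨hts, htP⟩ := ht_mem
  have htA : (t : Set _) ⊆ A := fun x hx => hs'A (hts hx)
  refine ⟨t, htA, ?_, ?_⟩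
  · -- cover
    have key : ∀ y ∈ s', ∃ x ∈ t, dist y x < ε := by
      intro y hy
      by_contra h
      push_neg at h
      have hyt : y ∉ t := fun hyt => absurd (h y hyt) (by simp [hε.le]; positivity)
      have hins : insert y t ∈ s'.powerset.filter P := by
        rw [Finset.mem_filter, Finset.mem_powerset]
        refine ⟨Finset.insert_subset hy hts, ?_⟩
        intro a ha b hb hab
        rcases Finset.mem_insert.mp ha with rfl | ha'
        · rcases Finset.mem_insert.mp hb with rfl | hb'
          · exact absurd rfl hab
          · exact h b hb'
        · rcases Finset.mem_insert.mp hb with rfl | hb'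
          · rw [dist_comm]; exact h a ha'
          · exact htP a ha' b hb' hab
      have := ht_max _ hins
      rw [Finset.card_insert_of_notMem hyt] at this
      omega
    intro z hz
    obtain ⟨y, hy, hzy⟩ : ∃ y ∈ s, dist z y < ε := by
      have := hs_cov hz
      simp only [Set.mem_iUnion] at this
      obtain ⟨y, hy, h⟩ := this
      exact ⟨y, hy, h⟩
    obtain ⟨x, hx, hyx⟩ := key y (by simpa [hs'] using hy)
    refine Set.mem_biUnion hx ?_
    have : dist z x < 2 * ε := by
      calc dist z x ≤ dist z y + dist y x := dist_triangle _ _ _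
      _ < ε + ε := by linarith
      _ = 2 * ε := by ring
    simpa [Metric.mem_ball] using this
  · -- volume bound
    have hdisj : (↑t : Set (EuclideanSpace ℝ ι)).PairwiseDisjoint (fun x => ball x (ε/2)) := by
      intro x hx y hy hxy
      exact Metric.ball_disjoint_ball (by
        have := htP x hx y hy hxy
        linarith)
    have hmeas : ∀ x ∈ t, MeasurableSet (ball x (ε/2)) := fun x _ => measurableSet_ball
    have hsum := measure_biUnion_finset hdisj hmeas (μ := volume)
    have hsub : (⋃ x ∈ t, ball x (ε/2)) ⊆ thickening ε A := by
      intro z hz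
      simp only [Set.mem_iUnion] at hz
      obtain ⟨x, hx, hzx⟩ := hz
      rw [Metric.mem_thickening_iff]
      exact ⟨x, htA hx, lt_of_lt_of_le hzx (by linarith)⟩
    calc (t.card : ℝ≥0∞) * volume (ball (0:EuclideanSpace ℝ ι) (ε/2))
        = ∑ x ∈ t, volume (ball x (ε/2)) := by
          rw [Finset.sum_congr rfl (fun x _ => volume.addHaar_ball_center x (ε/2))]
          simp [Finset.sum_const, nsmul_eq_mul]
      _ = volume (⋃ x ∈ t, ball x (ε/2)) := hsum.symm
      _ ≤ volume (thickening ε A) := measure_mono hsub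





lemma shell_vol {ι : Type*} [Fintype ι] (hcard : 2 ≤ Fintype.card ι) {a b ε : ℝ}
    (hb4 : b ≤ 4) (hab : b - a ≤ 4*ε) (hε : 0 ≤ ε) :
    volume {w : EuclideanSpace ℝ ι | a ≤ ‖w‖^2 ∧ ‖w‖^2 ≤ b}
      ≤ ENNReal.ofReal ((Fintype.card ι) * 2^(Fintype.card ι) * ε)
        * volume (ball (0:EuclideanSpace ℝ ι) 1) := by
  classical
  haveI : Nonempty ι := Fintype.card_pos_iff.mp (by omega)
  haveI : Nontrivial (EuclideanSpace ℝ ι) := by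
    apply Module.nontrivial_of_finrank_pos (R := ℝ)
    rw [finrank_euclideanSpace]; omega
  set c := Fintype.card ι with hc
  set a' := max a 0 with ha'
  rcases lt_or_ge b a' with hba | hab'
  · -- empty
    have : {w : EuclideanSpace ℝ ι | a ≤ ‖w‖^2 ∧ ‖w‖^2 ≤ b} = ∅ := by
      ext w
      simp only [Set.mem_setOf_eq, Set.mem_empty_iff_false, iff_false, not_and]
      intro h1
      have h0 : (0:ℝ) ≤ ‖w‖^2 := sq_nonneg _
      have : a' ≤ ‖w‖^2 := max_le h1 h0
      nlinarith
    rw [this]; simp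
  · have hb0 : 0 ≤ b := le_trans (le_max_right a 0) hab'
    set x := Real.sqrt b with hx
    set y := Real.sqrt a' with hy
    have hx2 : x^2 = b := Real.sq_sqrt hb0
    have hy2 : y^2 = a' := Real.sq_sqrt (le_max_right a 0)
    have hxy : y ≤ x := Real.sqrt_le_sqrt hab'
    have hx0 : 0 ≤ x := Real.sqrt_nonneg _
    have hy0 : 0 ≤ y := Real.sqrt_nonneg _
    have hx2' : x ≤ 2 := by
      nlinarith [hx2, hb4, hx0]
    have hset : {w : EuclideanSpace ℝ ι | a ≤ ‖w‖^2 ∧ ‖w‖^2 ≤ b}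
        = closedBall (0:EuclideanSpace ℝ ι) x \ ball 0 y := by
      ext w
      simp only [Set.mem_setOf_eq, Set.mem_diff, Metric.mem_closedBall, Metric.mem_ball,
        dist_zero_right]
      constructor
      · rintro ⟨h1, h2⟩
        constructor
        · nlinarith [hx2, norm_nonneg w, hx0]
        · intro hlt
          have : ‖w‖^2 < a' := by nlinarith [hy2, norm_nonneg w, hy0]
          have ha0 : a' ≤ ‖w‖^2 := max_le h1 (sq_nonneg _)
          linarith
      · rintro ⟨h1, h2⟩
        push_neg at h2
        have hw2 : ‖w‖^2 ≤ b := by nlinarith [norm_nonneg w]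
        have : a' ≤ ‖w‖^2 := by nlinarith
        exact ⟨le_trans (le_max_left a 0) this, hw2⟩
    rw [hset]
    have hballsub : ball (0:EuclideanSpace ℝ ι) y ⊆ closedBall 0 x :=
      (Metric.ball_subset_closedBall).trans (Metric.closedBall_subset_closedBall hxy)
    rw [measure_diff hballsub measurableSet_ball.nullMeasurableSet measure_ball_lt_top.ne]
    rw [Measure.addHaar_closedBall _ _ hx0, Measure.addHaar_ball _ _ hy0,
      finrank_euclideanSpace]
    rw [← ENNReal.sub_mul (by intro _ _; exact measure_ball_lt_top.ne)]
    gcongr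
    rw [← ENNReal.ofReal_sub _ (by positivity)]
    apply ENNReal.ofReal_le_ofReal
    -- key real inequality : x^c - y^c ≤ c * 2^c * ε
    have hgeom := geom_sum₂_mul x y c
    have hterm : ∀ i ∈ Finset.range c, x ^ i * y ^ (c - 1 - i) ≤ x^(c-1) := by
      intro i hi
      rw [Finset.mem_range] at hi
      calc x ^ i * y ^ (c - 1 - i) ≤ x ^ i * x ^ (c - 1 - i) := by
            gcongr
          _ = x ^ (c - 1) := by
            rw [← pow_add]
            congr 1
            omega
    have hS : (∑ i ∈ Finset.range c, x ^ i * y ^ (c - 1 - i)) ≤ c * x^(c-1) := by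
      calc (∑ i ∈ Finset.range c, x ^ i * y ^ (c - 1 - i)) ≤ ∑ _i ∈ Finset.range c, x^(c-1) :=
            Finset.sum_le_sum hterm
        _ = c * x^(c-1) := by simp [Finset.sum_const, mul_comm]
    have hxc2 : x^(c-2) ≤ 2^(c-2) := pow_le_pow_left₀ hx0 hx2' _
    have key : x^(c-1) * (x - y) ≤ 2^(c-2) * (b - a') := by
      have h1 : x^(c-1) = x^(c-2) * x := by rw [← pow_succ]; congr 1; omega
      have h2 : x * (x - y) ≤ (x + y) * (x - y) := by
        nlinarith [mul_nonneg hy0 (sub_nonneg.mpr hxy)]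
      have h3 : (x + y) * (x - y) = b - a' := by
        calc (x + y) * (x - y) = x^2 - y^2 := by ring
          _ = b - a' := by rw [hx2, hy2]
      calc x^(c-1) * (x - y) = x^(c-2) * (x * (x - y)) := by rw [h1]; ring
        _ ≤ 2^(c-2) * ((x+y)*(x-y)) := by
            apply mul_le_mul hxc2 h2 (by nlinarith [mul_nonneg hy0 (sub_nonneg.mpr hxy), sq_nonneg x]) (by positivity)
        _ = 2^(c-2) * (b - a') := by rw [h3]
    have hba' : b - a' ≤ 4*ε := by
      have : a ≤ a' := le_max_left a 0
      linarith
    have hfin : x^c - y^c ≤ c * 2^(c-2) * (4*ε) := by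
      have := hgeom
      have hs0 : 0 ≤ x - y := by linarith
      calc x^c - y^c = (∑ i ∈ Finset.range c, x ^ i * y ^ (c - 1 - i)) * (x - y) := hgeom.symm
        _ ≤ (c * x^(c-1)) * (x - y) := by apply mul_le_mul_of_nonneg_right hS hs0
        _ = c * (x^(c-1) * (x - y)) := by ring
        _ ≤ c * (2^(c-2) * (b - a')) := mul_le_mul_of_nonneg_left key (Nat.cast_nonneg c)
        _ ≤ c * (2^(c-2) * (4*ε)) := by gcongr
        _ = c * 2^(c-2) * (4*ε) := by ring
    have h4 : (2:ℝ)^c = 2^(c-2) * 4 := by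
      have hcc : c - 2 + 2 = c := by omega
      calc (2:ℝ)^c = 2^(c-2+2) := by rw [hcc]
        _ = 2^(c-2) * 4 := by rw [pow_add]; norm_num
    calc x^c - y^c ≤ c * 2^(c-2) * (4*ε) := hfin
      _ = c * 2^c * ε := by rw [h4]; ring

lemma annulusF {ι₁ ι₂ : Type} [Fintype ι₁] [Fintype ι₂] (h2 : 2 ≤ Fintype.card ι₂)
    (K : Set (EuclideanSpace ℝ ι₁)) (hK : MeasurableSet K) {ε : ℝ} (hε : 0 < ε) (hε1 : ε ≤ 1) :
    volume {z : EuclideanSpace ℝ (ι₁ ⊕ ι₂) |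
        (1-ε ≤ ‖z‖ ∧ ‖z‖ ≤ 1+ε) ∧ WithLp.toLp 2 (fun i => z (Sum.inl i)) ∈ K}
      ≤ (ENNReal.ofReal ((Fintype.card ι₂) * 2^(Fintype.card ι₂))
          * volume (ball (0:EuclideanSpace ℝ ι₂) 1)) * ENNReal.ofReal ε * volume K := by
  classical
  set c := Fintype.card ι₂ with hc
  -- measurable equivs
  set φ : EuclideanSpace ℝ (ι₁ ⊕ ι₂) ≃ᵐ ((i : ι₁ ⊕ ι₂) → ℝ) :=
    (MeasurableEquiv.toLp 2 ((ι₁ ⊕ ι₂) → ℝ)).symm with hφ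
  set ψ : ((i : ι₁ ⊕ ι₂) → ℝ) ≃ᵐ ((ι₁ → ℝ) × (ι₂ → ℝ)) :=
    MeasurableEquiv.sumPiEquivProdPi (fun _ => ℝ) with hψ
  set φ₁ : EuclideanSpace ℝ ι₁ ≃ᵐ (ι₁ → ℝ) := (MeasurableEquiv.toLp 2 (ι₁ → ℝ)).symm with hφ₁
  set φ₂ : EuclideanSpace ℝ ι₂ ≃ᵐ (ι₂ → ℝ) := (MeasurableEquiv.toLp 2 (ι₂ → ℝ)).symm with hφ₂
  set q₁ : (ι₁ → ℝ) → ℝ := fun u => ∑ i, (u i)^2 with hq₁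
  set q₂ : (ι₂ → ℝ) → ℝ := fun v => ∑ i, (v i)^2 with hq₂
  have hq₁m : Measurable q₁ := by measurability
  have hq₂m : Measurable q₂ := by measurability
  set K' : Set (ι₁ → ℝ) := ⇑φ₁.symm ⁻¹' K with hK'
  have hK'm : MeasurableSet K' := φ₁.symm.measurable hK
  set S' : Set ((ι₁ → ℝ) × (ι₂ → ℝ)) :=
    {p | ((1-ε)^2 ≤ q₁ p.1 + q₂ p.2 ∧ q₁ p.1 + q₂ p.2 ≤ (1+ε)^2) ∧ p.1 ∈ K'} with hS'
  have hS'm : MeasurableSet S' := by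
    apply MeasurableSet.inter
    · apply MeasurableSet.inter
      · exact measurableSet_le measurable_const ((hq₁m.comp measurable_fst).add
          (hq₂m.comp measurable_snd))
      · exact measurableSet_le ((hq₁m.comp measurable_fst).add
          (hq₂m.comp measurable_snd)) measurable_const
    · exact measurable_fst hK'm
  -- identify the set as a preimage
  have hset : {z : EuclideanSpace ℝ (ι₁ ⊕ ι₂) |
      (1-ε ≤ ‖z‖ ∧ ‖z‖ ≤ 1+ε) ∧ WithLp.toLp 2 (fun i => z (Sum.inl i)) ∈ K}
      = (⇑ψ ∘ ⇑φ) ⁻¹' S' := by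
    ext z
    have hnorm : ‖z‖ = Real.sqrt (q₁ (fun i => z (Sum.inl i)) + q₂ (fun i => z (Sum.inr i))) := by
      rw [EuclideanSpace.norm_eq]
      congr 1
      rw [hq₁, hq₂]
      rw [Fintype.sum_sum_type]
      simp [Real.norm_eq_abs, sq_abs]
    have hq0 : 0 ≤ q₁ (fun i => z (Sum.inl i)) + q₂ (fun i => z (Sum.inr i)) := by
      apply add_nonneg <;> · apply Finset.sum_nonneg; intro i _; positivity
    simp only [Set.mem_setOf_eq, Set.mem_preimage, Function.comp_apply]
    have happ : ψ (φ z) = (fun i => z (Sum.inl i), fun i => z (Sum.inr i)) := rfl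
    rw [happ]
    have hKmem : ((fun i => z (Sum.inl i)) ∈ K') ↔ (WithLp.toLp 2 (fun i => z (Sum.inl i)) ∈ K) := Iff.rfl
    simp only [hS', Set.mem_setOf_eq]
    rw [hKmem]
    constructor
    · rintro ⟨⟨h1, h2⟩, h3⟩
      refine ⟨⟨?_, ?_⟩, h3⟩
      · rw [hnorm] at h1
        calc (1-ε)^2 ≤ (Real.sqrt _)^2 := by
              apply pow_le_pow_left₀ (by linarith) h1
          _ = _ := Real.sq_sqrt hq0
      · rw [hnorm] at h2
        calc q₁ (fun i => z (Sum.inl i)) + q₂ (fun i => z (Sum.inr i))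
            = (Real.sqrt _)^2 := (Real.sq_sqrt hq0).symm
          _ ≤ (1+ε)^2 := by apply pow_le_pow_left₀ (Real.sqrt_nonneg _) h2
    · rintro ⟨⟨h1, h2⟩, h3⟩
      refine ⟨⟨?_, ?_⟩, h3⟩
      · rw [hnorm]
        have := Real.sqrt_le_sqrt h1
        rwa [Real.sqrt_sq (by linarith)] at this
      · rw [hnorm]
        have := Real.sqrt_le_sqrt h2
        rwa [Real.sqrt_sq (by linarith)] at this
  rw [hset]
  -- measure computations
  have mpφ : MeasurePreserving (⇑φ) volume volume :=
    EuclideanSpace.volume_preserving_symm_measurableEquiv_toLp (ι₁ ⊕ ι₂)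
  have mpψ : MeasurePreserving (⇑ψ) volume ((volume : Measure (ι₁ → ℝ)).prod volume) := by
    have h := (measurePreserving_sumPiEquivProdPi_symm (X := fun _ : ι₁ ⊕ ι₂ => ℝ)
      (fun _ => volume)).symm (MeasurableEquiv.sumPiEquivProdPi (fun _ : ι₁ ⊕ ι₂ => ℝ)).symm
    simp only [MeasurableEquiv.symm_symm] at h
    simp only [MeasureTheory.volume_pi]
    exact h
  have hψS'm : MeasurableSet (⇑ψ ⁻¹' S') := ψ.measurable hS'm
  have step1 : volume ((⇑ψ ∘ ⇑φ) ⁻¹' S') = ((volume : Measure (ι₁ → ℝ)).prod volume) S' := by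
    rw [Set.preimage_comp]
    rw [mpφ.measure_preimage hψS'm.nullMeasurableSet]
    rw [mpψ.measure_preimage hS'm.nullMeasurableSet]
  rw [step1, Measure.prod_apply hS'm]
  set κ : ℝ≥0∞ := ENNReal.ofReal ((c : ℝ) * 2^c * ε) * volume (ball (0:EuclideanSpace ℝ ι₂) 1)
    with hκ
  have mp2 : MeasurePreserving (⇑φ₂.symm) volume volume :=
    (EuclideanSpace.volume_preserving_symm_measurableEquiv_toLp ι₂).symm φ₂
  have hslice : ∀ u : ι₁ → ℝ, volume (Prod.mk u ⁻¹' S') ≤ K'.indicator (fun _ => κ) u := by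
    intro u
    by_cases hu : u ∈ K'
    · rw [Set.indicator_of_mem hu]
      set A := (1-ε)^2 - q₁ u with hA
      set B := (1+ε)^2 - q₁ u with hB
      set Wu : Set (EuclideanSpace ℝ ι₂) := {w | A ≤ ‖w‖^2 ∧ ‖w‖^2 ≤ B} with hWu
      have hWum : MeasurableSet Wu := by
        have hm : Measurable (fun w : EuclideanSpace ℝ ι₂ => ‖w‖^2) :=
          measurable_norm.pow_const 2
        exact (measurableSet_le measurable_const hm).inter
          (measurableSet_le hm measurable_const)
      have hsl : Prod.mk u ⁻¹' S' = ⇑φ₂.symm ⁻¹' Wu := by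
        ext v
        have hv : ‖φ₂.symm v‖^2 = q₂ v := by
          rw [EuclideanSpace.norm_eq, Real.sq_sqrt (by positivity)]
          rw [hq₂]
          apply Finset.sum_congr rfl
          intro i _
          rw [Real.norm_eq_abs, sq_abs]
          rfl
        simp only [Set.mem_preimage, Set.mem_setOf_eq, hS', hWu, hv]
        constructor
        · rintro ⟨⟨h1, h2⟩, _⟩
          constructor <;> [skip; skip] <;> simp only [hA, hB] <;> linarith
        · rintro ⟨h1, h2⟩
          rw [hA] at h1; rw [hB] at h2
          exact ⟨⟨by linarith, by linarith⟩, hu⟩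
      rw [hsl, mp2.measure_preimage hWum.nullMeasurableSet]
      have hq₁0 : 0 ≤ q₁ u := by apply Finset.sum_nonneg; intro i _; positivity
      have := shell_vol (ι := ι₂) h2 (a := A) (b := B)
        (by rw [hB]; nlinarith) (by rw [hA, hB]; ring_nf; nlinarith) hε.le
      rw [hκ]
      exact this
    · rw [Set.indicator_of_notMem hu]
      have : Prod.mk u ⁻¹' S' = ∅ := by
        ext v
        simp only [Set.mem_preimage, Set.mem_setOf_eq, hS', Set.mem_empty_iff_false, iff_false]
        rintro ⟨_, h⟩
        exact hu h
      rw [this]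
      simp
  calc ∫⁻ u, volume (Prod.mk u ⁻¹' S') ≤ ∫⁻ u, K'.indicator (fun _ => κ) u :=
        lintegral_mono hslice
    _ = κ * volume K' := by
        rw [lintegral_indicator hK'm]
        simp [lintegral_const, Measure.restrict_apply MeasurableSet.univ]
    _ = κ * volume K := by
        congr 1
        exact (EuclideanSpace.volume_preserving_symm_measurableEquiv_toLp ι₁).symm φ₁
          |>.measure_preimage hK.nullMeasurableSet
    _ = (ENNReal.ofReal ((Fintype.card ι₂) * 2^(Fintype.card ι₂))
          * volume (ball (0:EuclideanSpace ℝ ι₂) 1)) * ENNReal.ofReal ε * volume K := by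
        rw [hκ, ← hc]
        rw [ENNReal.ofReal_mul (by positivity : (0:ℝ) ≤ (c:ℝ) * 2^c)]
        ring




def projE {ι₁ ι₂ : Type} [Fintype ι₁] [Fintype ι₂] (z : EuclideanSpace ℝ (ι₁ ⊕ ι₂)) :
    EuclideanSpace ℝ ι₁ := WithLp.toLp 2 (fun i => z (Sum.inl i))

lemma proj_dist_le {ι₁ ι₂ : Type} [Fintype ι₁] [Fintype ι₂]
    (z w : EuclideanSpace ℝ (ι₁ ⊕ ι₂)) :
    dist (projE (ι₂ := ι₂) z) (projE w) ≤ dist z w := by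
  rw [EuclideanSpace.dist_eq, EuclideanSpace.dist_eq]
  apply Real.sqrt_le_sqrt
  rw [Fintype.sum_sum_type]
  have h : 0 ≤ ∑ i : ι₂, dist (z (Sum.inr i)) (w (Sum.inr i))^2 := by positivity
  have he : (∑ i : ι₁, dist (projE (ι₂ := ι₂) z i) (projE w i) ^ 2)
      = ∑ i : ι₁, dist (z (Sum.inl i)) (w (Sum.inl i)) ^ 2 := rfl
  rw [he]
  linarith

lemma core {ι₁ ι₂ : Type} [Fintype ι₁] [Fintype ι₂] (h2 : 2 ≤ Fintype.card ι₂) (M : ℕ)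
    (hM : M + 1 = Fintype.card ι₁ + Fintype.card ι₂) :
    ∃ C : ℝ≥0∞, C ≠ ∞ ∧ ∀ K : Set (EuclideanSpace ℝ ι₁), MeasurableSet K →
      μH[(M : ℝ)] (Metric.sphere (0 : EuclideanSpace ℝ (ι₁ ⊕ ι₂)) 1
          ∩ (projE (ι₂ := ι₂)) ⁻¹' K)
        ≤ C * volume K := by
  classical
  set Z := EuclideanSpace ℝ (ι₁ ⊕ ι₂) with hZ
  haveI : Nontrivial Z := by
    apply Module.nontrivial_of_finrank_pos (R := ℝ)
    rw [finrank_euclideanSpace]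
    simp only [Fintype.card_sum]
    omega
  set S : Set Z := Metric.sphere 0 1 with hS
  set vb : ℝ≥0∞ := volume (ball (0:Z) 1) with hvb
  have hvb0 : vb ≠ 0 := (measure_ball_pos volume 0 one_pos).ne'
  have hvbt : vb ≠ ∞ := measure_ball_lt_top.ne
  set CF : ℝ≥0∞ := ENNReal.ofReal ((Fintype.card ι₂) * 2^(Fintype.card ι₂))
      * volume (ball (0:EuclideanSpace ℝ ι₂) 1) with hCF
  have hCFt : CF ≠ ∞ := ENNReal.mul_ne_top ENNReal.ofReal_ne_top measure_ball_lt_top.ne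
  set C : ℝ≥0∞ := CF * ENNReal.ofReal (4^M * 2^(M+1)) * vb⁻¹ with hC
  have hCt : C ≠ ∞ := by
    apply ENNReal.mul_ne_top (ENNReal.mul_ne_top hCFt ENNReal.ofReal_ne_top)
    exact ENNReal.inv_ne_top.mpr hvb0
  have hCne0 : C ≠ 0 := by
    rw [hC]
    simp only [ne_eq, mul_eq_zero, ENNReal.inv_eq_zero, not_or]
    refine ⟨⟨?_, ?_⟩, hvbt⟩
    · rw [hCF]
      simp only [mul_eq_zero, not_or]
      constructor
      · exact (ENNReal.ofReal_pos.mpr (by positivity)).ne'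
      · exact (measure_ball_pos volume 0 one_pos).ne'
    · exact (ENNReal.ofReal_pos.mpr (by positivity)).ne'
  refine ⟨C, hCt, ?_⟩
  -- Step 1: the bound for open sets
  have hopen : ∀ U : Set (EuclideanSpace ℝ ι₁), IsOpen U →
      μH[(M : ℝ)] (S ∩ (projE (ι₂ := ι₂)) ⁻¹' U) ≤ C * volume U := by
    intro U hU
    set V : ℕ → Set (EuclideanSpace ℝ ι₁) :=
      fun j => (Metric.thickening (1/((j:ℝ)+1)) Uᶜ)ᶜ with hV
    set A : ℕ → Set Z := fun j => S ∩ (projE (ι₂ := ι₂)) ⁻¹' (V j) with hA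
    have hVU : ∀ j, V j ⊆ U := by
      intro j x hx
      by_contra hxU
      exact hx (Metric.self_subset_thickening
        (show (0:ℝ) < 1/((j:ℝ)+1) by positivity) Uᶜ (show x ∈ Uᶜ from hxU))
    have hmono : Monotone A := by
      intro j k hjk
      apply Set.inter_subset_inter_right
      apply Set.preimage_mono
      apply Set.compl_subset_compl.mpr
      apply Metric.thickening_mono
      apply one_div_le_one_div_of_le (by positivity)
      have : (j:ℝ) ≤ (k:ℝ) := by exact_mod_cast hjk
      linarith
    have hAU : (⋃ j, A j) = S ∩ (projE (ι₂ := ι₂)) ⁻¹' U := by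
      apply Set.Subset.antisymm
      · exact Set.iUnion_subset fun j =>
          Set.inter_subset_inter_right _ (Set.preimage_mono (hVU j))
      · rintro z ⟨hzS, hzU⟩
        obtain ⟨r, hr0, hrU⟩ := Metric.isOpen_iff.mp hU _ hzU
        obtain ⟨j, hj⟩ := exists_nat_one_div_lt hr0
        refine Set.mem_iUnion.mpr ⟨j, hzS, ?_⟩
        intro hmem
        rw [Metric.mem_thickening_iff] at hmem
        obtain ⟨y, hyU, hdy⟩ := hmem
        apply hyU
        apply hrU
        rw [Metric.mem_ball, dist_comm]
        calc dist (projE (ι₂ := ι₂) z) y < 1/((j:ℝ)+1) := hdy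
          _ < r := hj
    have hiSup : μH[(M : ℝ)] (S ∩ (projE (ι₂ := ι₂)) ⁻¹' U) = ⨆ j, μH[(M : ℝ)] (A j) := by
      rw [← hAU]
      exact hmono.measure_iUnion
    rw [hiSup]
    apply iSup_le
    intro j
    -- Step 2: bound μH (A j) via covers
    have hTB : TotallyBounded (A j) := by
      apply TotallyBounded.subset (Set.inter_subset_left)
      exact (isCompact_sphere (0:Z) 1).totallyBounded
    have pack : ∀ n : ℕ, ∃ t : Finset Z, ↑t ⊆ A j
        ∧ (A j ⊆ ⋃ x ∈ t, ball x (2*(1/((n:ℝ)+1)))) ∧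
        (t.card : ℝ≥0∞) * volume (ball (0:Z) ((1/((n:ℝ)+1))/2))
          ≤ volume (thickening (1/((n:ℝ)+1)) (A j)) :=
      fun n => packing' (A j) hTB (by positivity)
    choose t ht_sub ht_cov ht_vol using pack
    have key := MeasureTheory.Measure.hausdorffMeasure_le_liminf_sum (M : ℝ) (A j)
      (l := Filter.atTop) (fun n : ℕ => ENNReal.ofReal (4 * (1/((n:ℝ)+1))))
      ?_ (fun n => fun (i : {x // x ∈ t n}) => ball (i : Z) (2 * (1/((n:ℝ)+1)))) ?_ ?_
    · refine le_trans key ?_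
      apply Filter.liminf_le_of_frequently_le'
      apply Filter.Eventually.frequently
      filter_upwards [Filter.eventually_ge_atTop j] with n hnj
      -- the per-n bound
      have hε0 : (0:ℝ) < 1/((n:ℝ)+1) := by positivity
      have hε1 : 1/((n:ℝ)+1) ≤ 1 := by
        rw [div_le_one (by positivity)]
        have : (0:ℝ) ≤ (n:ℝ) := Nat.cast_nonneg n
        linarith
      have hεj : 1/((n:ℝ)+1) ≤ 1/((j:ℝ)+1) := by
        apply one_div_le_one_div_of_le (by positivity)
        have : (j:ℝ) ≤ (n:ℝ) := by exact_mod_cast hnj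
        linarith
      -- thickening is inside the annulus set
      have hthick : thickening (1/((n:ℝ)+1)) (A j) ⊆
          {z : Z | (1-(1/((n:ℝ)+1)) ≤ ‖z‖ ∧ ‖z‖ ≤ 1+(1/((n:ℝ)+1)))
            ∧ WithLp.toLp 2 (fun i => z (Sum.inl i)) ∈ U} := by
        intro z hz
        rw [Metric.mem_thickening_iff] at hz
        obtain ⟨a, ⟨haS, haV⟩, hda⟩ := hz
        have hna : ‖a‖ = 1 := by
          rw [hS] at haS
          simpa using haS
        have hdn : |‖z‖ - ‖a‖| ≤ dist z a := abs_norm_sub_norm_le _ _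
        rw [hna] at hdn
        have h1 : 1 - (1/((n:ℝ)+1)) ≤ ‖z‖ ∧ ‖z‖ ≤ 1 + (1/((n:ℝ)+1)) := by
          rw [abs_le] at hdn
          constructor <;> nlinarith
        refine ⟨h1, ?_⟩
        by_contra hzU
        apply haV
        rw [Metric.mem_thickening_iff]
        refine ⟨projE (ι₂ := ι₂) z, hzU, ?_⟩
        calc dist (projE (ι₂ := ι₂) a) (projE (ι₂ := ι₂) z) ≤ dist a z := proj_dist_le a z
          _ = dist z a := dist_comm a z
          _ < 1/((n:ℝ)+1) := hda
          _ ≤ 1/((j:ℝ)+1) := hεj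
      have hvolthick : volume (thickening (1/((n:ℝ)+1)) (A j))
          ≤ CF * ENNReal.ofReal (1/((n:ℝ)+1)) * volume U :=
        le_trans (measure_mono hthick) (annulusF h2 U hU.measurableSet hε0 hε1)
      -- sum bound
      set B : ℝ≥0∞ := volume (ball (0:Z) ((1/((n:ℝ)+1))/2)) with hB
      have hB0 : B ≠ 0 := (measure_ball_pos volume 0 (by positivity)).ne'
      have hBt : B ≠ ∞ := measure_ball_lt_top.ne
      have hcard : (↑(t n).card : ℝ≥0∞) * B ≤ volume (thickening (1/((n:ℝ)+1)) (A j)) :=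
        ht_vol n
      have hsum : ∑ i : {x // x ∈ t n},
          (EMetric.diam (ball (i : Z) (2*(1/((n:ℝ)+1)))))^((M:ℕ):ℝ)
          ≤ (↑(t n).card : ℝ≥0∞) * (ENNReal.ofReal (4*(1/((n:ℝ)+1))))^M := by
        calc ∑ i : {x // x ∈ t n}, (EMetric.diam (ball (i : Z) (2*(1/((n:ℝ)+1)))))^((M:ℕ):ℝ)
            ≤ ∑ _i : {x // x ∈ t n}, (ENNReal.ofReal (4*(1/((n:ℝ)+1))))^((M:ℕ):ℝ) := by
              apply Finset.sum_le_sum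
              intro i _
              apply ENNReal.rpow_le_rpow _ (by positivity)
              calc EMetric.diam (ball (i : Z) (2*(1/((n:ℝ)+1))))
                  = EMetric.diam (Metric.eball (i : Z)
                      (ENNReal.ofReal (2*(1/((n:ℝ)+1))))) := by
                    rw [Metric.emetric_ball]
                _ ≤ 2 * ENNReal.ofReal (2*(1/((n:ℝ)+1))) := EMetric.diam_ball
                _ = ENNReal.ofReal (4*(1/((n:ℝ)+1))) := by
                    rw [show (2:ℝ≥0∞) = ENNReal.ofReal 2 by simp,
                      ← ENNReal.ofReal_mul (by norm_num : (0:ℝ) ≤ 2)]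
                    congr 1
                    ring
          _ = (↑(t n).card : ℝ≥0∞) * (ENNReal.ofReal (4*(1/((n:ℝ)+1))))^((M:ℕ):ℝ) := by
              rw [Finset.sum_const, Finset.card_univ, Fintype.card_coe, nsmul_eq_mul]
          _ = (↑(t n).card : ℝ≥0∞) * (ENNReal.ofReal (4*(1/((n:ℝ)+1))))^M := by
              rw [← ENNReal.rpow_natCast (ENNReal.ofReal (4*(1/((n:ℝ)+1)))) M]
      have hfinrank : Module.finrank ℝ Z = M + 1 := by
        rw [show Module.finrank ℝ Z = Fintype.card (ι₁ ⊕ ι₂) from finrank_euclideanSpace,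
          Fintype.card_sum, hM]
      have hBeq : B = ENNReal.ofReal (((1/((n:ℝ)+1))/2)^(M+1)) * vb := by
        rw [hB, Measure.addHaar_ball volume 0 (by positivity), hfinrank, hvb]
      have halg : (↑(t n).card : ℝ≥0∞) * (ENNReal.ofReal (4*(1/((n:ℝ)+1))))^M
          ≤ C * volume U := by
        have h1 : (↑(t n).card : ℝ≥0∞) * (ENNReal.ofReal (4*(1/((n:ℝ)+1))))^M * B
            ≤ (CF * ENNReal.ofReal (1/((n:ℝ)+1)) * volume U)
                * (ENNReal.ofReal (4*(1/((n:ℝ)+1))))^M := by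
          calc (↑(t n).card : ℝ≥0∞) * (ENNReal.ofReal (4*(1/((n:ℝ)+1))))^M * B
              = ((↑(t n).card : ℝ≥0∞) * B) * (ENNReal.ofReal (4*(1/((n:ℝ)+1))))^M := by
                ring
            _ ≤ (volume (thickening (1/((n:ℝ)+1)) (A j)))
                  * (ENNReal.ofReal (4*(1/((n:ℝ)+1))))^M := by gcongr
            _ ≤ (CF * ENNReal.ofReal (1/((n:ℝ)+1)) * volume U)
                  * (ENNReal.ofReal (4*(1/((n:ℝ)+1))))^M := by gcongr
        have h2 : (CF * ENNReal.ofReal (1/((n:ℝ)+1)) * volume U)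
              * (ENNReal.ofReal (4*(1/((n:ℝ)+1))))^M
            = (C * volume U) * B := by
          rw [hBeq, hC]
          rw [← ENNReal.ofReal_pow (by positivity)]
          have hr : ENNReal.ofReal (1/((n:ℝ)+1)) * ENNReal.ofReal ((4*(1/((n:ℝ)+1)))^M)
              = ENNReal.ofReal (4^M * 2^(M+1)) * ENNReal.ofReal (((1/((n:ℝ)+1))/2)^(M+1)) := by
            rw [← ENNReal.ofReal_mul (by positivity), ← ENNReal.ofReal_mul (by positivity)]
            congr 1
            generalize (1/((n:ℝ)+1) : ℝ) = x
            field_simp [mul_pow, div_pow]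
            have h12 : ((1:ℝ)/2)^M * 2^M = 1 := by rw [← mul_pow]; norm_num
            linear_combination (-(x * x^M * 4^M)) * h12
          calc CF * ENNReal.ofReal (1/((n:ℝ)+1)) * volume U
                * ENNReal.ofReal ((4*(1/((n:ℝ)+1)))^M)
              = CF * volume U * (ENNReal.ofReal (1/((n:ℝ)+1))
                  * ENNReal.ofReal ((4*(1/((n:ℝ)+1)))^M)) := by ring
            _ = CF * volume U * (ENNReal.ofReal (4^M * 2^(M+1))
                  * ENNReal.ofReal (((1/((n:ℝ)+1))/2)^(M+1))) := by rw [hr]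
            _ = (CF * ENNReal.ofReal (4^M * 2^(M+1)) * vb⁻¹ * volume U)
                  * (ENNReal.ofReal (((1/((n:ℝ)+1))/2)^(M+1)) * vb) := by
                rw [show CF * ENNReal.ofReal (4^M * 2^(M+1)) * vb⁻¹ * volume U
                    * (ENNReal.ofReal (((1/((n:ℝ)+1))/2)^(M+1)) * vb)
                    = CF * volume U * (ENNReal.ofReal (4^M * 2^(M+1))
                      * ENNReal.ofReal (((1/((n:ℝ)+1))/2)^(M+1))) * (vb⁻¹ * vb) by ring]
                rw [ENNReal.inv_mul_cancel hvb0 hvbt, mul_one]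
        rw [h2] at h1
        exact (ENNReal.mul_le_mul_iff_left hB0 hBt).mp h1
      exact le_trans hsum halg
    · -- tendsto r 0
      have h0 : Filter.Tendsto (fun n : ℕ => (4 : ℝ) * (1/((n:ℝ)+1))) Filter.atTop (nhds 0) := by
        have h0 := tendsto_one_div_add_atTop_nhds_zero_nat (𝕜 := ℝ)
        have h1 := h0.const_mul (4:ℝ)
        simpa [mul_comm] using h1
      have h2 := ENNReal.tendsto_ofReal h0
      simpa using h2
    · -- diam bound
      filter_upwards with n
      intro i
      calc EMetric.diam (ball (i : Z) (2 * (1/((n:ℝ)+1))))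
          = EMetric.diam (Metric.eball (i : Z)
              (ENNReal.ofReal (2*(1/((n:ℝ)+1))))) := by rw [Metric.emetric_ball]
        _ ≤ 2 * ENNReal.ofReal (2 * (1/((n:ℝ)+1))) := EMetric.diam_ball
        _ = ENNReal.ofReal (4 * (1/((n:ℝ)+1))) := by
            rw [show (2:ℝ≥0∞) = ENNReal.ofReal 2 by simp,
              ← ENNReal.ofReal_mul (by norm_num : (0:ℝ) ≤ 2)]
            congr 1
            ring
    · -- covering
      filter_upwards with n
      intro z hz
      obtain ⟨x, hx, hzx⟩ := Set.mem_iUnion₂.mp (ht_cov n hz)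
      exact Set.mem_iUnion.mpr ⟨⟨x, hx⟩, hzx⟩
  -- Step 3: general measurable K via outer regularity
  intro K hK
  rcases eq_top_or_lt_top (volume K) with hKtop | hKfin
  · rw [hKtop]
    rw [ENNReal.mul_top hCne0]
    exact le_top
  · apply ENNReal.le_of_forall_pos_le_add
    intro δ hδ _
    set η : ℝ≥0∞ := (δ : ℝ≥0∞) / C with hη
    have hη0 : η ≠ 0 := by
      rw [hη]
      apply ENNReal.div_ne_zero.mpr
      exact ⟨by exact_mod_cast hδ.ne', hCt⟩
    obtain ⟨U, hKU, hUopen, hUlt⟩ := Set.exists_isOpen_lt_of_lt K (volume K + η)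
      (ENNReal.lt_add_right hKfin.ne hη0)
    calc μH[(M : ℝ)] (S ∩ (projE (ι₂ := ι₂)) ⁻¹' K)
        ≤ μH[(M : ℝ)] (S ∩ (projE (ι₂ := ι₂)) ⁻¹' U) := by
          apply measure_mono
          exact Set.inter_subset_inter_right _ (Set.preimage_mono hKU)
      _ ≤ C * volume U := hopen U hUopen
      _ ≤ C * (volume K + η) := by gcongr
      _ = C * volume K + C * η := by rw [mul_add]
      _ ≤ C * volume K + δ := by
          gcongr
          rw [hη]
          rw [ENNReal.mul_div_cancel hCne0 hCt]



def Jmap (ι₁ ι₂ : Type) [Fintype ι₁] [Fintype ι₂] :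
    EuclideanSpace ℝ ι₁ →ₗ[ℝ] EuclideanSpace ℝ (ι₁ ⊕ ι₂) where
  toFun u := WithLp.toLp 2 (Sum.elim (WithLp.ofLp u) 0)
  map_add' u v := by
    ext s
    rcases s with i | j <;> simp
  map_smul' c u := by
    ext s
    rcases s with i | j <;> simp

@[simp] lemma Jmap_inl {ι₁ ι₂ : Type} [Fintype ι₁] [Fintype ι₂]
    (u : EuclideanSpace ℝ ι₁) (i : ι₁) : Jmap ι₁ ι₂ u (Sum.inl i) = u i := rfl

@[simp] lemma Jmap_inr {ι₁ ι₂ : Type} [Fintype ι₁] [Fintype ι₂]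
    (u : EuclideanSpace ℝ ι₁) (j : ι₂) : Jmap ι₁ ι₂ u (Sum.inr j) = 0 := rfl

theorem pushforward_sphere_measure_bounded (d m : ℕ) (hd : 2 ≤ d) (hm : 1 ≤ m)
    (σ : Measure (EuclideanSpace ℝ (Fin (m + 1) × Fin d)))
    (hσ : σ = (μH[(((m + 1) * d - 1 : ℕ) : ℝ)]).restrict
      (Metric.sphere (0 : EuclideanSpace ℝ (Fin (m + 1) × Fin d)) 1))
    (Φ : EuclideanSpace ℝ (Fin (m + 1) × Fin d) → EuclideanSpace ℝ (Fin m × Fin d))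
    (hΦ : Φ = fun y => WithLp.toLp 2 (fun p => y (p.1.castSucc, p.2) - y (Fin.last m, p.2))) :
    σ.map Φ ≪ (volume : Measure (EuclideanSpace ℝ (Fin m × Fin d))) ∧
      ∃ C : ℝ≥0, ∀ E : Set (EuclideanSpace ℝ (Fin m × Fin d)), MeasurableSet E →
        σ.map Φ E ≤ (C : ℝ≥0∞) * volume E := by
  classical
  subst hσ
  subst hΦ
  set X := EuclideanSpace ℝ (Fin (m + 1) × Fin d) with hX
  set Y := EuclideanSpace ℝ (Fin m × Fin d) with hY
  set Φₗ : X →ₗ[ℝ] Y :=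
    { toFun := fun y => WithLp.toLp 2 (fun p => y (p.1.castSucc, p.2) - y (Fin.last m, p.2))
      map_add' := by
        intro a b
        ext p
        show (a (p.1.castSucc, p.2) + b (p.1.castSucc, p.2))
            - (a (Fin.last m, p.2) + b (Fin.last m, p.2))
            = (a (p.1.castSucc, p.2) - a (Fin.last m, p.2))
              + (b (p.1.castSucc, p.2) - b (Fin.last m, p.2))
        ring
      map_smul' := by
        intro c a
        ext p
        show (c * a (p.1.castSucc, p.2)) - (c * a (Fin.last m, p.2))
            = c * (a (p.1.castSucc, p.2) - a (Fin.last m, p.2))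
        ring } with hΦₗ
  have hΦcoe : (fun (y : X) => WithLp.toLp 2 (fun (p : Fin m × Fin d) =>
      y (p.1.castSucc, p.2) - y (Fin.last m, p.2))) = ⇑Φₗ := rfl
  rw [hΦcoe]
  have hΦmeas : Measurable ⇑Φₗ := Φₗ.continuous_of_finiteDimensional.measurable
  -- surjectivity of Φₗ
  have hsurj : Function.Surjective ⇑Φₗ := by
    intro x
    refine ⟨(WithLp.toLp 2 (fun p => if h : p.1 = Fin.last m then 0 else x (p.1.castPred h, p.2)) : X), ?_⟩
    ext p
    show (if h : (p.1.castSucc : Fin (m+1)) = Fin.last m then (0:ℝ)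
      else x ((p.1.castSucc).castPred h, p.2))
      - (if h : (Fin.last m : Fin (m+1)) = Fin.last m then (0:ℝ)
        else x ((Fin.last m).castPred h, p.2)) = x p
    rw [dif_neg (Fin.castSucc_lt_last p.1).ne, dif_pos rfl]
    rw [Fin.castPred_castSucc]
    simp
  -- the kernel
  set K : Submodule ℝ X := LinearMap.ker Φₗ with hK
  have hKd : Module.finrank ℝ K = d := by
    set ιd : EuclideanSpace ℝ (Fin d) →ₗ[ℝ] X :=
      { toFun := fun w => WithLp.toLp 2 (fun p => w p.2)
        map_add' := fun a b => rfl
        map_smul' := fun c a => rfl }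
      with hιd
    have hinj : Function.Injective ιd := by
      intro a b hab
      ext j
      exact congrArg (fun v : X => v (Fin.last m, j)) hab
    have hrange : LinearMap.range ιd = K := by
      apply le_antisymm
      · rintro y ⟨w, rfl⟩
        show Φₗ (ιd w) = 0
        ext p
        show w p.2 - w p.2 = 0
        ring
      · intro y hy
        refine ⟨WithLp.toLp 2 (fun j => y (Fin.last m, j)), ?_⟩
        ext p
        show y (Fin.last m, p.2) = y p
        obtain ⟨i, j⟩ := p
        induction i using Fin.lastCases with
        | last => rfl
        | cast i =>
          have h0 : Φₗ y = 0 := hy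
          have h1 : y (i.castSucc, j) - y (Fin.last m, j) = 0 := congrArg (fun v : Y => v (i, j)) h0
          show y (Fin.last m, j) = y (i.castSucc, j)
          linarith
    rw [← hrange, LinearMap.finrank_range_of_inj hinj, finrank_euclideanSpace,
      Fintype.card_fin]
  have hXrank : Module.finrank ℝ X = (m+1)*d := by
    rw [show Module.finrank ℝ X = Fintype.card (Fin (m+1) × Fin d) from
      finrank_euclideanSpace, Fintype.card_prod, Fintype.card_fin, Fintype.card_fin]
  have hKorth : Module.finrank ℝ (Kᗮ : Submodule ℝ X) = m*d := by
    have h := Submodule.finrank_add_finrank_orthogonal (K := K)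
    rw [hKd, hXrank] at h
    have hmd : (m+1)*d = m*d+d := by ring
    omega
  -- orthonormal basis adapted to the splitting
  set b1 : OrthonormalBasis (Fin m × Fin d) ℝ (Kᗮ : Submodule ℝ X) :=
    (stdOrthonormalBasis ℝ (Kᗮ : Submodule ℝ X)).reindex
      ((finCongr hKorth).trans finProdFinEquiv.symm) with hb1
  set b2 : OrthonormalBasis (Fin d) ℝ K :=
    (stdOrthonormalBasis ℝ K).reindex (finCongr hKd) with hb2
  set fam : (Fin m × Fin d) ⊕ (Fin d) → X :=
    Sum.elim (fun i => (b1 i : X)) (fun j => (b2 j : X)) with hfam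
  have hfam_on : Orthonormal ℝ fam := by
    rw [orthonormal_iff_ite]
    intro s₁ s₂
    rcases s₁ with a₁ | j₁ <;> rcases s₂ with a₂ | j₂
    · show (inner ℝ (b1 a₁ : X) (b1 a₂ : X) : ℝ) = _
      rw [← Submodule.coe_inner]
      rw [orthonormal_iff_ite.mp b1.orthonormal a₁ a₂]
      simp
    · show (inner ℝ (b1 a₁ : X) (b2 j₂ : X) : ℝ) = _
      rw [real_inner_comm]
      rw [Submodule.inner_right_of_mem_orthogonal (b2 j₂).2 (b1 a₁).2]
      simp
    · show (inner ℝ (b2 j₁ : X) (b1 a₂ : X) : ℝ) = _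
      rw [Submodule.inner_right_of_mem_orthogonal (b2 j₁).2 (b1 a₂).2]
      simp
    · show (inner ℝ (b2 j₁ : X) (b2 j₂ : X) : ℝ) = _
      rw [← Submodule.coe_inner]
      rw [orthonormal_iff_ite.mp b2.orthonormal j₁ j₂]
      simp
  have hfam_span : ⊤ ≤ Submodule.span ℝ (Set.range fam) := by
    rw [hfam, Set.Sum.elim_range]
    rw [Submodule.span_union]
    have h1 : Submodule.span ℝ (Set.range (fun i => (b1 i : X))) = Kᗮ := by
      have hr : Set.range (fun i => (b1 i : X))
          = (Kᗮ : Submodule ℝ X).subtype '' Set.range b1 := by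
        rw [← Set.range_comp]; rfl
      rw [hr, Submodule.span_image, ← b1.coe_toBasis, b1.toBasis.span_eq]
      simp [Submodule.map_top, Submodule.range_subtype]
    have h2 : Submodule.span ℝ (Set.range (fun j => (b2 j : X))) = K := by
      have hr : Set.range (fun j => (b2 j : X)) = K.subtype '' Set.range b2 := by
        rw [← Set.range_comp]; rfl
      rw [hr, Submodule.span_image, ← b2.coe_toBasis, b2.toBasis.span_eq]
      simp [Submodule.map_top, Submodule.range_subtype]
    rw [h1, h2, sup_comm, Submodule.sup_orthogonal_of_hasOrthogonalProjection]
  set B : OrthonormalBasis ((Fin m × Fin d) ⊕ (Fin d)) ℝ X :=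
    OrthonormalBasis.mk hfam_on hfam_span with hB
  have hBapp : ⇑B = fam := OrthonormalBasis.coe_mk hfam_on hfam_span
  set e : X ≃ₗᵢ[ℝ] EuclideanSpace ℝ ((Fin m × Fin d) ⊕ (Fin d)) := B.repr with he
  have hsymm : ∀ w : EuclideanSpace ℝ ((Fin m × Fin d) ⊕ (Fin d)),
      e.symm w = ∑ s, w s • B s := fun w => (B.sum_repr_symm w).symm
  -- vectors supported on inr coordinates map into K
  have hker : ∀ w : EuclideanSpace ℝ ((Fin m × Fin d) ⊕ (Fin d)),
      (∀ a, w (Sum.inl a) = 0) → e.symm w ∈ K := by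
    intro w hw
    rw [hsymm, Fintype.sum_sum_type]
    apply Submodule.add_mem
    · rw [Finset.sum_congr rfl (fun a _ => by rw [hw a, zero_smul])]
      simp
    · apply Submodule.sum_mem
      intro j _
      apply Submodule.smul_mem
      have hb : B (Sum.inr j) = (b2 j : X) := by rw [hBapp]; rfl
      rw [hb]
      exact (b2 j).2
  -- inl-supported vectors map into Kᗮ
  have hker' : ∀ u : Y, e.symm (Jmap (Fin m × Fin d) (Fin d) u) ∈ Kᗮ := by
    intro u
    rw [hsymm, Fintype.sum_sum_type]
    apply Submodule.add_mem
    · apply Submodule.sum_mem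
      intro a _
      apply Submodule.smul_mem
      have hb : B (Sum.inl a) = (b1 a : X) := by rw [hBapp]; rfl
      rw [hb]
      exact (b1 a).2
    · rw [Finset.sum_congr rfl (fun j _ => by rw [Jmap_inr, zero_smul])]
      simp
  -- the map L
  set L : Y →ₗ[ℝ] Y :=
    Φₗ ∘ₗ (e.symm.toLinearEquiv.toLinearMap ∘ₗ Jmap (Fin m × Fin d) (Fin d)) with hL
  have hLapp : ∀ u : Y, L u = Φₗ (e.symm (Jmap (Fin m × Fin d) (Fin d) u)) := fun u => rfl
  -- factorization
  have hfact : ∀ z : EuclideanSpace ℝ ((Fin m × Fin d) ⊕ (Fin d)),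
      Φₗ (e.symm z) = L (projE (ι₂ := Fin d) z) := by
    intro z
    have hdiff : e.symm (z - Jmap (Fin m × Fin d) (Fin d) (projE (ι₂ := Fin d) z)) ∈ K := by
      apply hker
      intro a
      show z (Sum.inl a) - z (Sum.inl a) = 0
      ring
    have h0 : Φₗ (e.symm (z - Jmap (Fin m × Fin d) (Fin d) (projE (ι₂ := Fin d) z))) = 0 :=
      hdiff
    rw [map_sub, map_sub] at h0
    rw [hLapp]
    exact (sub_eq_zero.mp h0)
  -- L is bijective
  have hLinj : Function.Injective ⇑L := by
    rw [injective_iff_map_eq_zero]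
    intro u hu
    have h1 : e.symm (Jmap (Fin m × Fin d) (Fin d) u) ∈ K := hu
    have h2 := hker' u
    have h3 : e.symm (Jmap (Fin m × Fin d) (Fin d) u) = 0 :=
      Submodule.disjoint_def.mp (Submodule.orthogonal_disjoint K) _ h1 h2
    have h4 : Jmap (Fin m × Fin d) (Fin d) u = 0 := by
      have h5 := congrArg e h3
      rwa [e.apply_symm_apply, map_zero] at h5
    ext i
    exact congrArg (fun v : EuclideanSpace ℝ ((Fin m × Fin d) ⊕ (Fin d)) => v (Sum.inl i)) h4
  have hLsurj : Function.Surjective ⇑L := by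
    intro y
    obtain ⟨x, hx⟩ := hsurj y
    exact ⟨projE (ι₂ := Fin d) (e x), by rw [← hfact, e.symm_apply_apply, hx]⟩
  have hLdet : LinearMap.det L ≠ 0 := by
    intro hdet
    obtain ⟨x, hx, hx0⟩ := SetLike.exists_of_lt (LinearMap.bot_lt_ker_of_det_eq_zero hdet)
    exact hx0 (by simpa using hLinj (show L x = L 0 by simpa using hx))
  -- dimensions for core
  set M : ℕ := (m+1)*d - 1 with hMdef
  have hM : M + 1 = Fintype.card (Fin m × Fin d) + Fintype.card (Fin d) := by
    rw [hMdef]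
    simp only [Fintype.card_prod, Fintype.card_fin]
    have h1 : (m+1)*d = m*d+d := by ring
    have h2 : 1 ≤ (m+1)*d := by
      calc 1 ≤ d := by omega
        _ ≤ (m+1)*d := Nat.le_mul_of_pos_left d (by omega)
    omega
  have h2card : 2 ≤ Fintype.card (Fin d) := by rw [Fintype.card_fin]; exact hd
  obtain ⟨C₀, hC₀t, hC₀⟩ := core (ι₁ := Fin m × Fin d) (ι₂ := Fin d) h2card M hM
  -- the final constant
  set Ctot : ℝ≥0∞ := C₀ * ENNReal.ofReal |(LinearMap.det L)⁻¹| with hCtot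
  have hCtott : Ctot ≠ ∞ := ENNReal.mul_ne_top hC₀t ENNReal.ofReal_ne_top
  -- the main estimate
  have main : ∀ E : Set Y, MeasurableSet E →
      ((μH[(((m + 1) * d - 1 : ℕ) : ℝ)]).restrict
        (Metric.sphere (0 : X) 1)).map ⇑Φₗ E ≤ Ctot * volume E := by
    intro E hE
    have hpre : MeasurableSet (⇑Φₗ ⁻¹' E) := hΦmeas hE
    have h1 : ((μH[(((m + 1) * d - 1 : ℕ) : ℝ)]).restrict
        (Metric.sphere (0 : X) 1)).map ⇑Φₗ E
        = μH[((M : ℕ) : ℝ)] (⇑Φₗ ⁻¹' E ∩ Metric.sphere (0 : X) 1) := by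
      rw [Measure.map_apply hΦmeas hE, Measure.restrict_apply hpre]
    have h3 : μH[((M : ℕ) : ℝ)] (⇑Φₗ ⁻¹' E ∩ Metric.sphere (0 : X) 1)
        = μH[((M : ℕ) : ℝ)] (⇑e '' (⇑Φₗ ⁻¹' E ∩ Metric.sphere (0 : X) 1)) :=
      (e.isometry.hausdorffMeasure_image (Or.inl (by positivity)) _).symm
    have h4 : ⇑e '' (⇑Φₗ ⁻¹' E ∩ Metric.sphere (0 : X) 1)
        = Metric.sphere (0 : EuclideanSpace ℝ ((Fin m × Fin d) ⊕ (Fin d))) 1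
          ∩ (projE (ι₂ := Fin d)) ⁻¹' (⇑L ⁻¹' E) := by
      ext z
      constructor
      · rintro ⟨x, ⟨hxE, hxS⟩, rfl⟩
        constructor
        · rw [mem_sphere_zero_iff_norm, e.norm_map]
          rwa [mem_sphere_zero_iff_norm] at hxS
        · show L (projE (ι₂ := Fin d) (e x)) ∈ E
          rw [← hfact, e.symm_apply_apply]
          exact hxE
      · rintro ⟨hzS, hzK⟩
        refine ⟨e.symm z, ⟨?_, ?_⟩, e.apply_symm_apply z⟩
        · show Φₗ (e.symm z) ∈ E
          rw [hfact]
          exact hzK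
        · rw [mem_sphere_zero_iff_norm, e.symm.norm_map]
          rwa [mem_sphere_zero_iff_norm] at hzS
    have h5 : MeasurableSet (⇑L ⁻¹' E) :=
      (L.continuous_of_finiteDimensional.measurable) hE
    have h6 := hC₀ (⇑L ⁻¹' E) h5
    have h7 : volume (⇑L ⁻¹' E) = ENNReal.ofReal |(LinearMap.det L)⁻¹| * volume E :=
      Measure.addHaar_preimage_linearMap volume hLdet E
    calc ((μH[(((m + 1) * d - 1 : ℕ) : ℝ)]).restrict (Metric.sphere (0 : X) 1)).map ⇑Φₗ E
        = μH[((M : ℕ) : ℝ)] (⇑Φₗ ⁻¹' E ∩ Metric.sphere (0 : X) 1) := h1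
      _ = μH[((M : ℕ) : ℝ)] (Metric.sphere
            (0 : EuclideanSpace ℝ ((Fin m × Fin d) ⊕ (Fin d))) 1
            ∩ (projE (ι₂ := Fin d)) ⁻¹' (⇑L ⁻¹' E)) := by rw [h3, h4]
      _ ≤ C₀ * volume (⇑L ⁻¹' E) := h6
      _ = Ctot * volume E := by rw [h7, hCtot, mul_assoc]
  constructor
  · apply Measure.AbsolutelyContinuous.mk
    intro s hs hs0
    have hb := main s hs
    rw [hs0, mul_zero] at hb
    exact le_antisymm hb (zero_le)
  · refine ⟨Ctot.toNNReal, ?_⟩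
    intro E hE
    rw [ENNReal.coe_toNNReal hCtott]
    exact main E hE
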